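/- arXiv:1408.5220 — 6 statements merged into one kernel-verified Lean document; each statement's English description precedes it below -/
import Mathlib

section
/- Let C be a category and let f : Y ⟶ X and g : U ⟶ X be morphisms such that the pullback U ×_X Y (of g and f) exists in C. Assume that the first projection pr₁ : U ×_X Y ⟶ U is an isomorphism, that g is a regular epimorphism (i.e. g is a coequaliser of some parallel pair of morphisms into U), and that the second projection pr₂ : U ×_X Y ⟶ Y is an epimorphism. Then f is an isomorphism. -/
open CategoryTheory Limits

/-- If the pullback of a regular epimorphism `g` and a morphism `f` exists, the first
projection of the pullback is an isomorphism and the second projection is an epimorphism,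
then `f` is an isomorphism. -/
theorem stmt_0 {C : Type*} [Category C] {X Y U : C} (f : Y ⟶ X) (g : U ⟶ X)
    [HasPullback g f] (hfst : IsIso (pullback.fst g f)) (hsnd : Epi (pullback.snd g f))
    (hg : RegularEpi g) : IsIso f := by
  set p : U ⟶ Y := inv (pullback.fst g f) ≫ pullback.snd g f with hpdef
  have hpf : p ≫ f = g := by
    rw [hpdef, Category.assoc, ← pullback.condition, IsIso.inv_hom_id_assoc]
  have hp : hg.left ≫ p = hg.right ≫ p := by
    have hw : hg.left ≫ g = (hg.right ≫ p) ≫ f := by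
      rw [Category.assoc, hpf, hg.w]
    have hu : pullback.lift hg.left (hg.right ≫ p) hw = hg.left ≫ inv (pullback.fst g f) := by
      rw [← cancel_mono (pullback.fst g f), pullback.lift_fst, Category.assoc,
        IsIso.inv_hom_id, Category.comp_id]
    have := pullback.lift_snd hg.left (hg.right ≫ p) hw
    rw [hu] at this
    rw [hpdef, ← Category.assoc, this]
  let h : X ⟶ Y := hg.isColimit.desc (Cofork.ofπ p hp)
  have hgh : g ≫ h = p := hg.isColimit.fac (Cofork.ofπ p hp) WalkingParallelPair.one
  have hge : Epi g := by
    exact ⟨fun u v huv => Cofork.IsColimit.hom_ext hg.isColimit huv⟩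
  have h1 : h ≫ f = 𝟙 X := by
    rw [← cancel_epi g, ← Category.assoc, hgh, hpf, Category.comp_id]
  have h2 : f ≫ h = 𝟙 Y := by
    rw [← cancel_epi (pullback.snd g f), Category.comp_id, ← Category.assoc,
      ← pullback.condition, Category.assoc, hgh, hpdef, ← Category.assoc,
      IsIso.hom_inv_id, Category.id_comp]
  exact ⟨h, h2, h1⟩
end

section
/- Let g : U → X be a biquotient map and let f : Y → X be any continuous map of topological spaces. Then the coordinate projection pr₁ : Y ×_X U → Y from the fibre product is a biquotient map. -/
/-- A continuous surjection `f : X → Y` is a *biquotient map* if for every `y : Y` and every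
family of open subsets of `X` covering `f ⁻¹' {y}`, finitely many members of the family have
images whose union is a neighbourhood of `y`. -/
def IsBiquotientMap {X Y : Type*} [TopologicalSpace X] [TopologicalSpace Y] (f : X → Y) : Prop :=
  Continuous f ∧ Function.Surjective f ∧
    ∀ y : Y, ∀ 𝒰 : Set (Set X), (∀ U ∈ 𝒰, IsOpen U) → f ⁻¹' {y} ⊆ ⋃₀ 𝒰 →
      ∃ ℱ : Finset (Set X), ↑ℱ ⊆ 𝒰 ∧ (⋃ U ∈ ℱ, f '' U) ∈ nhds y

/-- The pull-back of a biquotient map `g : U → X` along any continuous map `f : Y → X`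
is a biquotient map: the coordinate projection `pr₁ : Y ×_X U → Y` is biquotient. -/
theorem stmt_3 {X Y U : Type*} [TopologicalSpace X] [TopologicalSpace Y] [TopologicalSpace U]
    (g : U → X) (f : Y → X) (hg : IsBiquotientMap g) (hf : Continuous f) :
    IsBiquotientMap (fun p : {p : Y × U // f p.1 = g p.2} => p.1.1) := by
  obtain ⟨hgc, hgs, hgb⟩ := hg
  refine ⟨(continuous_fst.comp continuous_subtype_val), ?_, ?_⟩
  · intro y
    obtain ⟨u, hu⟩ := hgs (f y)
    exact ⟨⟨(y, u), hu.symm⟩, rfl⟩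
  · intro y 𝒰 hop hcov
    -- family of open sets in U
    set 𝒱 : Set (Set U) := {B | IsOpen B ∧ ∃ V ∈ 𝒰, ∃ A : Set Y, IsOpen A ∧ y ∈ A ∧
      (Subtype.val ⁻¹' (A ×ˢ B) : Set {p : Y × U // f p.1 = g p.2}) ⊆ V} with h𝒱
    have hVop : ∀ B ∈ 𝒱, IsOpen B := fun B hB => hB.1
    have hVcov : g ⁻¹' {f y} ⊆ ⋃₀ 𝒱 := by
      intro u hu
      have hu' : f y = g u := (Set.mem_preimage.mp hu).symm
      set p : {p : Y × U // f p.1 = g p.2} := ⟨(y, u), hu'⟩ with hp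
      have hpmem : p ∈ (fun p : {p : Y × U // f p.1 = g p.2} => p.1.1) ⁻¹' {y} := rfl
      obtain ⟨V, hV𝒰, hpV⟩ := hcov hpmem
      obtain ⟨W, hWop, hWeq⟩ := isOpen_induced_iff.mp (hop V hV𝒰)
      have hpW : ((y, u) : Y × U) ∈ W := by
        have : p ∈ Subtype.val ⁻¹' W := by rw [hWeq]; exact hpV
        exact this
      obtain ⟨A, B, hAop, hBop, hyA, huB, hABW⟩ := isOpen_prod_iff.mp hWop y u hpW
      refine ⟨B, ⟨hBop, V, hV𝒰, A, hAop, hyA, ?_⟩, huB⟩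
      intro q hq
      rw [← hWeq]
      exact hABW hq
    obtain ⟨ℱ, hℱ𝒱, hℱnhds⟩ := hgb (f y) 𝒱 hVop hVcov
    have hch : ∀ B ∈ ℱ, ∃ V ∈ 𝒰, ∃ A : Set Y, IsOpen A ∧ y ∈ A ∧
        (Subtype.val ⁻¹' (A ×ˢ B) : Set {p : Y × U // f p.1 = g p.2}) ⊆ V :=
      fun B hB => (hℱ𝒱 hB).2
    classical
    choose V hV𝒰 A hAop hyA hsub using hch
    refine ⟨ℱ.attach.image (fun b => V b.1 b.2), ?_, ?_⟩
    · intro s hs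
      simp only [Finset.coe_image, Set.mem_image, Finset.mem_coe, Finset.mem_attach]
        at hs
      obtain ⟨b, _, rfl⟩ := hs
      exact hV𝒰 b.1 b.2
    · have hN : (f ⁻¹' (⋃ B ∈ ℱ, g '' B) ∩ ⋂ b ∈ ℱ.attach, A b.1 b.2) ∈ nhds y := by
        refine Filter.inter_mem (hf.continuousAt.preimage_mem_nhds hℱnhds) ?_
        refine (isOpen_biInter_finset (fun b _ => hAop b.1 b.2)).mem_nhds ?_
        exact Set.mem_iInter₂.mpr fun b _ => hyA b.1 b.2
      refine Filter.mem_of_superset hN ?_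
      rintro y' ⟨hy1, hy2⟩
      simp only [Set.mem_preimage, Set.mem_iUnion] at hy1
      obtain ⟨B, hBℱ, u', hu'B, hu'⟩ := hy1
      have hq : f y' = g u' := hu'.symm
      refine Set.mem_iUnion₂.mpr ⟨V B hBℱ, ?_, ⟨⟨(y', u'), hq⟩, ?_, rfl⟩⟩
      · exact Finset.mem_image.mpr ⟨⟨B, hBℱ⟩, Finset.mem_attach _ _, rfl⟩
      · apply hsub B hBℱ
        refine ⟨?_, hu'B⟩
        have := Set.mem_iInter₂.mp hy2 ⟨B, hBℱ⟩ (Finset.mem_attach _ _)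
        exact this
end

section
/- Let f : X → Y be a biquotient map of topological spaces. Then Y is Hausdorff if and only if the set {(x₁, x₂) ∈ X × X : f(x₁) = f(x₂)} is a closed subset of the product space X × X. -/
/-- For a biquotient map `f : X → Y`, the space `Y` is Hausdorff if and only if
`{(x₁, x₂) : f x₁ = f x₂}` is closed in `X × X`. -/
theorem stmt_8 {X Y : Type*} [TopologicalSpace X] [TopologicalSpace Y]
    (f : X → Y) (hf : IsBiquotientMap f) :
    T2Space Y ↔ IsClosed {p : X × X | f p.1 = f p.2} := by
  obtain ⟨hc, hs, hbq⟩ := hf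
  constructor
  · intro _
    exact isClosed_diagonal.preimage ((hc.comp continuous_fst).prodMk (hc.comp continuous_snd))
  · intro hK
    rw [t2Space_iff_disjoint_nhds]
    intro y₁ y₂ hne
    -- Step 1: each point of the fiber of y₁ has an open nbhd whose image misses a nbhd of y₂
    have step1 : ∀ x, f x = y₁ →
        ∃ U : Set X, IsOpen U ∧ x ∈ U ∧ ∃ W ∈ nhds y₂, ∀ u ∈ U, f u ∉ W := by
      intro x hx
      set 𝒰 : Set (Set X) :=
        {V | IsOpen V ∧ ∃ U : Set X, IsOpen U ∧ x ∈ U ∧ ∀ u ∈ U, ∀ v ∈ V, f u ≠ f v} with h𝒰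
      have hcov : f ⁻¹' {y₂} ⊆ ⋃₀ 𝒰 := by
        intro v hv
        have hvy : f v = y₂ := hv
        have hmem : (x, v) ∈ {p : X × X | f p.1 = f p.2}ᶜ := by
          simp only [Set.mem_compl_iff, Set.mem_setOf_eq, hx, hvy]
          exact hne
        obtain ⟨U, V, hU, hV, hxU, hvV, hsub⟩ :=
          isOpen_prod_iff.mp hK.isOpen_compl x v hmem
        refine ⟨V, ⟨hV, U, hU, hxU, fun u hu w hw => ?_⟩, hvV⟩
        exact hsub (Set.mk_mem_prod hu hw)
      obtain ⟨ℱ, hℱ, hnh⟩ := hbq y₂ 𝒰 (fun V hV => hV.1) hcov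
      have hch : ∀ V ∈ ℱ, ∃ U : Set X, IsOpen U ∧ x ∈ U ∧ ∀ u ∈ U, ∀ v ∈ V, f u ≠ f v :=
        fun V hV => (hℱ hV).2
      choose! g hg1 hg2 hg3 using hch
      refine ⟨⋂ V ∈ ℱ, g V, isOpen_biInter_finset hg1, Set.mem_iInter₂.mpr hg2,
        ⋃ V ∈ ℱ, f '' V, hnh, ?_⟩
      intro u hu hfu
      simp only [Set.mem_iUnion] at hfu
      obtain ⟨V, hV, v, hvV, hfvu⟩ := hfu
      exact hg3 V hV u (Set.mem_iInter₂.mp hu V hV) v hvV hfvu.symm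
    -- Step 2: use biquotient at y₁
    set 𝒱 : Set (Set X) := {U | IsOpen U ∧ ∃ W ∈ nhds y₂, ∀ u ∈ U, f u ∉ W} with h𝒱
    have hcov : f ⁻¹' {y₁} ⊆ ⋃₀ 𝒱 := by
      intro x hx
      obtain ⟨U, hUo, hxU, W, hW, hdisj⟩ := step1 x hx
      exact ⟨U, ⟨hUo, W, hW, hdisj⟩, hxU⟩
    obtain ⟨ℱ, hℱ, hnh⟩ := hbq y₁ 𝒱 (fun U hU => hU.1) hcov
    have hch : ∀ U ∈ ℱ, ∃ W ∈ nhds y₂, ∀ u ∈ U, f u ∉ W := fun U hU => (hℱ hU).2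
    choose! W hW1 hW2 using hch
    rw [Filter.disjoint_iff]
    refine ⟨⋃ U ∈ ℱ, f '' U, hnh, ⋂ U ∈ ℱ, W U,
      (Filter.biInter_finset_mem ℱ).mpr hW1, ?_⟩
    rw [Set.disjoint_left]
    intro z hz hz'
    simp only [Set.mem_iUnion] at hz
    obtain ⟨U, hU, u, huU, hfu⟩ := hz
    exact hW2 U hU u huU (hfu ▸ Set.mem_iInter₂.mp hz' U hU)
end

section
/- Let f : X → Y be a biquotient map of topological spaces. If X is second countable (has a countable base for its topology), then Y is second countable. -/
/-- The image of a second countable space under a biquotient map is second countable. -/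
theorem stmt_9 {X Y : Type*} [TopologicalSpace X] [TopologicalSpace Y]
    (f : X → Y) (hf : IsBiquotientMap f) [SecondCountableTopology X] :
    SecondCountableTopology Y := by
  obtain ⟨hcont, hsurj, hbi⟩ := hf
  set B : Set (Set X) := TopologicalSpace.countableBasis X with hB
  set S : Set (Set Y) :=
    (fun t : Set (Set X) => interior (⋃ U ∈ t, f '' U)) '' {t | t.Finite ∧ t ⊆ B} with hS
  have hScount : S.Countable := by
    apply Set.Countable.image
    exact Set.countable_setOf_finite_subset (TopologicalSpace.countable_countableBasis X)
  have hbasis : TopologicalSpace.IsTopologicalBasis S := by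
    apply TopologicalSpace.isTopologicalBasis_of_isOpen_of_nhds
    · rintro V ⟨t, -, rfl⟩
      exact isOpen_interior
    · intro y V hyV hV
      set 𝒰 : Set (Set X) := {U | U ∈ B ∧ U ⊆ f ⁻¹' V} with h𝒰
      have hcover : f ⁻¹' {y} ⊆ ⋃₀ 𝒰 := by
        intro x hx
        have hx' : x ∈ f ⁻¹' V := by
          simp only [Set.mem_preimage, Set.mem_singleton_iff] at hx ⊢
          rw [hx]; exact hyV
        obtain ⟨U, hUB, hxU, hUsub⟩ :=
          (TopologicalSpace.isBasis_countableBasis X).exists_subset_of_mem_open hx'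
            (hV.preimage hcont)
        exact ⟨U, ⟨hUB, hUsub⟩, hxU⟩
      obtain ⟨ℱ, hℱ, hnhds⟩ := hbi y 𝒰
        (fun U hU => TopologicalSpace.isOpen_of_mem_countableBasis hU.1) hcover
      refine ⟨interior (⋃ U ∈ (↑ℱ : Set (Set X)), f '' U),
        ⟨↑ℱ, ⟨ℱ.finite_toSet, fun U hU => (hℱ hU).1⟩, rfl⟩, ?_, ?_⟩
      · rw [mem_interior_iff_mem_nhds]
        simpa using hnhds
      · refine interior_subset.trans ?_
        intro z hz
        simp only [Set.mem_iUnion] at hz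
        obtain ⟨U, hU, x, hxU, rfl⟩ := hz
        exact (hℱ hU).2 hxU
  exact hbasis.secondCountableTopology hScount
end

section
/- Let f : X → Y be a biquotient map of topological spaces. If every point of X has a compact neighbourhood, then every point of Y has a compact neighbourhood. -/
open Set Filter Topology

/- Cover the fibre over `y` by interiors of compact sets; the biquotient property picks finitely
many, and the images of the corresponding compact sets form a compact neighbourhood of `y`. -/
theorem IsBiquotientMap.exists_isCompact_mem_nhds {X Y : Type*} [TopologicalSpace X]
    [TopologicalSpace Y] {f : X → Y} (hf : IsBiquotientMap f) {y : Y}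
    (hy : ∀ x ∈ f ⁻¹' {y}, ∃ K : Set X, IsCompact K ∧ K ∈ 𝓝 x) :
    ∃ K : Set Y, IsCompact K ∧ K ∈ 𝓝 y := by
  obtain ⟨hcont, -, hcover⟩ := hf
  have hfibre : f ⁻¹' {y} ⊆ ⋃₀ (interior '' {K | IsCompact K}) := fun x hx ↦ by
    obtain ⟨K, hK, hKx⟩ := hy x hx
    exact ⟨interior K, mem_image_of_mem _ hK, mem_interior_iff_mem_nhds.2 hKx⟩
  obtain ⟨ℱ, hℱ, hℱy⟩ :=
    hcover y _ (by rintro _ ⟨K, -, rfl⟩; exact isOpen_interior) hfibre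
  choose! K hK hKU using fun U (hU : U ∈ ℱ) ↦ hℱ hU
  refine ⟨⋃ U ∈ ℱ, f '' K U, ℱ.isCompact_biUnion fun U hU ↦ (hK U hU).image hcont,
    mem_of_superset hℱy (iUnion₂_mono fun U hU ↦
      image_mono ((hKU U hU).symm.subset.trans interior_subset))⟩

/-- If `f : X → Y` is a biquotient map and every point of `X` has a compact
neighbourhood, then every point of `Y` has a compact neighbourhood. -/
theorem stmt_10 {X Y : Type*} [TopologicalSpace X] [TopologicalSpace Y]
    (f : X → Y) (hf : IsBiquotientMap f)
    (hX : ∀ x : X, ∃ K : Set X, IsCompact K ∧ K ∈ nhds x) :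
    ∀ y : Y, ∃ K : Set Y, IsCompact K ∧ K ∈ nhds y :=
  fun _ ↦ hf.exists_isCompact_mem_nhds fun x _ ↦ hX x
end

section
/- Let E and F be real Banach spaces, let M be a C^∞ manifold modelled on E and N a C^∞ manifold modelled on F, and let f : M → N be a C^∞ map. Then the following are equivalent: (1) for every x ∈ M there exist an open neighbourhood U of f(x) in N and a map σ : N → M that is C^∞ on U and satisfies σ(f(x)) = x and f(σ(u)) = u for all u ∈ U (a smooth local section of f through x); (2) for every x ∈ M the differential of f at x, as a continuous linear map from the tangent space of M at x to the tangent space of N at f(x), admits a continuous linear right inverse (i.e. it is split surjective). -/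
/-!
A local section `σ` through `x` satisfies `f ∘ σ = id` near `f x`, so by the chain rule
`mfderiv σ (f x)` is a right inverse of `mfderiv f x`.

Conversely, in charts `f` becomes a map `g : E → F` with `fderiv g a ∘ s = id`. Then
`w ↦ g (a + s w)` has derivative `id` at `0`, so by the inverse function theorem it has a smooth
local inverse `Φ⁻¹`, and `w ↦ a + s (Φ⁻¹ w)`, read back through the charts, is a smooth local
section of `f`.
-/

open scoped Manifold Topology
open Set Filter

section NormedSpace

variable {𝕂 : Type*} [RCLike 𝕂] {E F : Type*} [NormedAddCommGroup E] [NormedSpace 𝕂 E]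
  [NormedAddCommGroup F] [NormedSpace 𝕂 F] {n : WithTop ℕ∞}

theorem exists_openPartialHomeomorph_contDiffAt_symm [CompleteSpace E] {h : E → F}
    {h' : E ≃L[𝕂] F} {a : E} (hh : ∀ᶠ u in 𝓝 a, ContDiffAt 𝕂 n h u)
    (hh' : HasFDerivAt h (h' : E →L[𝕂] F) a) (hn : n ≠ 0) :
    ∃ Φ : OpenPartialHomeomorph E F, ⇑Φ = h ∧ a ∈ Φ.source ∧
      ∀ w ∈ Φ.target, ContDiffAt 𝕂 n Φ.symm w := by
  have hstrict := hh.self_of_nhds.hasStrictFDerivAt' hh' hn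
  set good := {u | ContDiffAt 𝕂 n h u ∧ fderiv 𝕂 h u ∈ range ((↑) : (E ≃L[𝕂] F) → E →L[𝕂] F)}
  have hgood : good ∈ 𝓝 a := by
    have hinv := (hh.self_of_nhds.continuousAt_fderiv hn).preimage_mem_nhds
      (hh'.fderiv ▸ ContinuousLinearEquiv.nhds h')
    exact hh.and hinv
  -- Shrinking the source to where `h` is `C^n` with invertible derivative makes `Φ.symm` `C^n`
  -- on the whole target, not only at `h a`.
  refine ⟨(hstrict.toOpenPartialHomeomorph h).restrOpen (interior good) isOpen_interior, rfl,
    ⟨hstrict.mem_toOpenPartialHomeomorph_source, mem_interior_iff_mem_nhds.2 hgood⟩, ?_⟩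
  intro w hw
  set Φ := (hstrict.toOpenPartialHomeomorph h).restrOpen (interior good) isOpen_interior
  obtain ⟨hsmooth, e, he⟩ := interior_subset (Φ.map_target hw).2
  exact Φ.contDiffAt_symm hw (he ▸ (hsmooth.differentiableAt hn).hasFDerivAt) hsmooth

theorem exists_local_rightInverse_of_fderiv_comp_eq_id [CompleteSpace F] {g : E → F} {a : E}
    {s : F →L[𝕂] E} (hg : ∀ᶠ u in 𝓝 a, ContDiffAt 𝕂 n g u)
    (hs : (fderiv 𝕂 g a).comp s = ContinuousLinearMap.id 𝕂 F) (hn : n ≠ 0) :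
    ∃ τ : F → E, τ (g a) = a ∧ ∀ᶠ w in 𝓝 (g a), ContDiffAt 𝕂 n τ w ∧ g (τ w) = w := by
  set A : F → E := fun w => a + s w
  have hA : ContDiff 𝕂 n A := contDiff_const.add s.contDiff
  have hA0 : A 0 = a := by simp [A]
  have hk : ∀ᶠ w in 𝓝 0, ContDiffAt 𝕂 n (g ∘ A) w := by
    filter_upwards [(hA0 ▸ hA.continuous.tendsto 0).eventually hg] with w hw
      using hw.comp w hA.contDiffAt
  have hk' : HasFDerivAt (g ∘ A) ((ContinuousLinearEquiv.refl 𝕂 F : F ≃L[𝕂] F) : F →L[𝕂] F) 0 := by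
    have hgd : HasFDerivAt g (fderiv 𝕂 g a) (A 0) :=
      hA0 ▸ (hg.self_of_nhds.differentiableAt hn).hasFDerivAt
    have hcomp := hgd.comp 0 (s.hasFDerivAt.const_add a)
    rwa [hs] at hcomp
  obtain ⟨Φ, hΦ, h0, hΦsymm⟩ := exists_openPartialHomeomorph_contDiffAt_symm hk hk' hn
  have hΦ0 : Φ 0 = g a := by rw [hΦ]; simp [A]
  refine ⟨A ∘ Φ.symm, ?_, ?_⟩
  · simp [← hΦ0, Φ.left_inv h0, hA0]
  · filter_upwards [Φ.open_target.mem_nhds (hΦ0 ▸ Φ.map_source h0)] with w hw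
    refine ⟨hA.contDiffAt.comp w (hΦsymm w hw), ?_⟩
    change (g ∘ A) (Φ.symm w) = w
    rw [← hΦ, Φ.right_inv hw]

end NormedSpace

section Manifold

variable {𝕜 : Type*} [NontriviallyNormedField 𝕜]
  {E : Type*} [NormedAddCommGroup E] [NormedSpace 𝕜 E] {H : Type*} [TopologicalSpace H]
  {I : ModelWithCorners 𝕜 E H} {M : Type*} [TopologicalSpace M] [ChartedSpace H M]
  {E' : Type*} [NormedAddCommGroup E'] [NormedSpace 𝕜 E'] {H' : Type*} [TopologicalSpace H']
  {I' : ModelWithCorners 𝕜 E' H'} {N : Type*} [TopologicalSpace N] [ChartedSpace H' N]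

theorem mfderiv_comp_mfderiv_eq_id_of_eventually_rightInverse {f : M → N} {σ : N → M}
    {x : M} {y : N} (hσy : σ y = x) (hf : MDifferentiableAt I I' f x)
    (hσ : MDifferentiableAt I' I σ y) (hfσ : ∀ᶠ v in 𝓝 y, f (σ v) = v) :
    (mfderiv I I' f x).comp (mfderiv I' I σ y) = ContinuousLinearMap.id 𝕜 (TangentSpace I' y) := by
  subst hσy
  have hid : f ∘ σ =ᶠ[𝓝 y] id := hfσ
  rw [← mfderiv_comp y hf hσ, hid.mfderiv_eq, mfderiv_id]

end Manifold

section SelfModel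

variable {𝕂 : Type*} [RCLike 𝕂]
  {E : Type*} [NormedAddCommGroup E] [NormedSpace 𝕂 E] {M : Type*} [TopologicalSpace M]
  [ChartedSpace E M] {F : Type*} [NormedAddCommGroup F] [NormedSpace 𝕂 F] [CompleteSpace F]
  {N : Type*} [TopologicalSpace N] [ChartedSpace F N] {n : WithTop ℕ∞}
  [IsManifold 𝓘(𝕂, E) n M] [IsManifold 𝓘(𝕂, F) n N]

theorem exists_local_section_of_mfderiv_comp_eq_id {f : M → N} {x : M}
    (hf : ∀ᶠ y in 𝓝 x, ContMDiffAt 𝓘(𝕂, E) 𝓘(𝕂, F) n f y) (hn : n ≠ 0)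
    {s : TangentSpace 𝓘(𝕂, F) (f x) →L[𝕂] TangentSpace 𝓘(𝕂, E) x}
    (hs : (mfderiv 𝓘(𝕂, E) 𝓘(𝕂, F) f x).comp s = ContinuousLinearMap.id 𝕂 _) :
    ∃ σ : N → M, σ (f x) = x ∧
      ∀ᶠ v in 𝓝 (f x), ContMDiffAt 𝓘(𝕂, F) 𝓘(𝕂, E) n σ v ∧ f (σ v) = v := by
  set φ := extChartAt 𝓘(𝕂, E) x
  set ψ := extChartAt 𝓘(𝕂, F) (f x)
  set g := writtenInExtChartAt 𝓘(𝕂, E) 𝓘(𝕂, F) x f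
  have hφ : Tendsto φ.symm (𝓝 (φ x)) (𝓝 x) := by
    simpa only [φ, extChartAt_to_inv] using (continuousAt_extChartAt_symm x).tendsto
  have hga : g (φ x) = ψ (f x) := congrArg (ψ ∘ f) (extChartAt_to_inv x)
  have hφsymm : ∀ u ∈ φ.target, ContMDiffAt 𝓘(𝕂, E) 𝓘(𝕂, E) n φ.symm u := fun u hu =>
    (contMDiffOn_extChartAt_symm x).contMDiffAt ((isOpen_extChartAt_target x).mem_nhds hu)
  have hψ : ∀ v ∈ ψ.source, ContMDiffAt 𝓘(𝕂, F) 𝓘(𝕂, F) n ψ v := fun v hv =>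
    contMDiffAt_extChartAt' (by rwa [extChartAt_source] at hv)
  have hψsrc : ψ.source ∈ 𝓝 (f x) := extChartAt_source_mem_nhds (f x)
  have hg : ∀ᶠ u in 𝓝 (φ x), ContDiffAt 𝕂 n g u := by
    filter_upwards [(isOpen_extChartAt_target x).mem_nhds (mem_extChartAt_target x),
      hφ.eventually hf, hφ.eventually (hf.self_of_nhds.continuousAt.preimage_mem_nhds hψsrc)]
      with u hu hfu hψu
    exact contMDiffAt_iff_contDiffAt.1 ((hψ _ hψu).comp u (hfu.comp u (hφsymm u hu)))
  have hdg : fderiv 𝕂 g (φ x) = mfderiv 𝓘(𝕂, E) 𝓘(𝕂, F) f x := by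
    simp [(hf.self_of_nhds.mdifferentiableAt hn).mfderiv, g, φ]
  obtain ⟨τ, hτa, hτ⟩ := exists_local_rightInverse_of_fderiv_comp_eq_id hg (hdg ▸ hs) hn
  rw [hga] at hτa hτ
  set σ : N → M := φ.symm ∘ τ ∘ ψ
  have hτψ : Tendsto (τ ∘ ψ) (𝓝 (f x)) (𝓝 (φ x)) :=
    hτa ▸ hτ.self_of_nhds.1.continuousAt.tendsto.comp (continuousAt_extChartAt (f x)).tendsto
  have hσ : Tendsto σ (𝓝 (f x)) (𝓝 x) := hφ.comp hτψ
  refine ⟨σ, by simp [σ, hτa, φ], ?_⟩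
  filter_upwards [hψsrc, (continuousAt_extChartAt (f x)).tendsto.eventually hτ,
    hτψ.eventually ((isOpen_extChartAt_target x).mem_nhds (mem_extChartAt_target x)),
    hσ.eventually (hf.self_of_nhds.continuousAt.preimage_mem_nhds hψsrc)]
    with v hv ⟨hτv, hgτv⟩ hτφ hfσv
  refine ⟨(hφsymm _ hτφ).comp v ((contMDiffAt_iff_contDiffAt.2 hτv).comp v (hψ v hv)), ?_⟩
  exact ψ.injOn hfσv hv hgτv

end SelfModel

theorem stmt_18_general {E F : Type*} [NormedAddCommGroup E] [NormedSpace ℝ E]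
    [NormedAddCommGroup F] [NormedSpace ℝ F] [CompleteSpace F]
    {M N : Type*} [TopologicalSpace M] [ChartedSpace E M]
    [IsManifold (𝓘(ℝ, E)) (⊤ : ℕ∞) M]
    [TopologicalSpace N] [ChartedSpace F N] [IsManifold (𝓘(ℝ, F)) (⊤ : ℕ∞) N]
    (f : M → N) (hf : ContMDiff (𝓘(ℝ, E)) (𝓘(ℝ, F)) (⊤ : ℕ∞) f) :
    (∀ x : M, ∃ U : Set N, IsOpen U ∧ f x ∈ U ∧ ∃ σ : N → M,
        ContMDiffOn (𝓘(ℝ, F)) (𝓘(ℝ, E)) (⊤ : ℕ∞) σ U ∧ σ (f x) = x ∧ ∀ u ∈ U, f (σ u) = u) ↔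
      ∀ x : M, ∃ s : TangentSpace (𝓘(ℝ, F)) (f x) →L[ℝ] TangentSpace (𝓘(ℝ, E)) x,
        (mfderiv (𝓘(ℝ, E)) (𝓘(ℝ, F)) f x).comp s =
          ContinuousLinearMap.id ℝ (TangentSpace (𝓘(ℝ, F)) (f x)) := by
  have hn : ((⊤ : ℕ∞) : WithTop ℕ∞) ≠ 0 := by simp
  constructor
  · intro h x
    obtain ⟨U, hUo, hxU, σ, hσ, hσx, hfσ⟩ := h x
    have hσd := (hσ.contMDiffAt (hUo.mem_nhds hxU)).mdifferentiableAt hn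
    exact ⟨mfderiv (𝓘(ℝ, F)) (𝓘(ℝ, E)) σ (f x),
      mfderiv_comp_mfderiv_eq_id_of_eventually_rightInverse hσx ((hf x).mdifferentiableAt hn) hσd
        (eventually_of_mem (hUo.mem_nhds hxU) hfσ)⟩
  · intro h x
    obtain ⟨s, hs⟩ := h x
    obtain ⟨σ, hσx, hσ⟩ :=
      exists_local_section_of_mfderiv_comp_eq_id (Eventually.of_forall hf) hn hs
    obtain ⟨U, hU, hUo, hxU⟩ := eventually_nhds_iff.1 hσ
    exact ⟨U, hUo, hxU, σ, fun v hv => (hU v hv).1.contMDiffWithinAt, hσx,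
      fun v hv => (hU v hv).2⟩

/-- For a `C^∞` map `f : M → N` between `C^∞` Banach manifolds, the following are
equivalent: (1) through every point `x` of `M` there is a smooth local section of `f`
(defined on an open neighbourhood `U` of `f x` and sending `f x` to `x`); (2) at every
point `x` of `M` the differential `mfderiv f x` admits a continuous linear right inverse,
i.e. it is split surjective. -/
theorem stmt_18 {E F : Type*} [NormedAddCommGroup E] [NormedSpace ℝ E] [CompleteSpace E]
    [NormedAddCommGroup F] [NormedSpace ℝ F] [CompleteSpace F]
    {M N : Type*} [TopologicalSpace M] [ChartedSpace E M]
    [IsManifold (𝓘(ℝ, E)) (⊤ : ℕ∞) M]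
    [TopologicalSpace N] [ChartedSpace F N] [IsManifold (𝓘(ℝ, F)) (⊤ : ℕ∞) N]
    (f : M → N) (hf : ContMDiff (𝓘(ℝ, E)) (𝓘(ℝ, F)) (⊤ : ℕ∞) f) :
    (∀ x : M, ∃ U : Set N, IsOpen U ∧ f x ∈ U ∧ ∃ σ : N → M,
        ContMDiffOn (𝓘(ℝ, F)) (𝓘(ℝ, E)) (⊤ : ℕ∞) σ U ∧ σ (f x) = x ∧ ∀ u ∈ U, f (σ u) = u) ↔
      ∀ x : M, ∃ s : TangentSpace (𝓘(ℝ, F)) (f x) →L[ℝ] TangentSpace (𝓘(ℝ, E)) x,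
        (mfderiv (𝓘(ℝ, E)) (𝓘(ℝ, F)) f x).comp s =
          ContinuousLinearMap.id ℝ (TangentSpace (𝓘(ℝ, F)) (f x)) :=
  stmt_18_general f hf
end
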